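/- arXiv:1202.0004 — 2 statements merged into one kernel-verified Lean document; each statement's English description precedes it below -/
import Mathlib

section
/- Let p > 0, b > 0, and λ ∈ ℝ. Then for every z > 0, the derivative of z ↦ z^λ E^λ_{p,b}(−z) equals λ z^{λ−1} E^{λ+1}_{p,b}(−z). -/
/-!
Termwise, `z ^ λ * E^λ_{p,b}(-z) = ∑ (λ)_k (-1)^k z^(λ+k) / (Γ(pk+b) k!)`. Differentiating
`z ^ (λ + k)` produces the factor `λ + k`, and `(λ)_k (λ + k) = (λ)_(k+1) = λ (λ+1)_k`.
Termwise differentiation is legitimate because the coefficients decay faster than any geometric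
sequence: by log-convexity of `Γ`, `Γ(x + p) ≥ Γ(x) (x - 1)^p`, so the ratio of consecutive
coefficients tends to `0`.
-/

/-- The generalized Mittag-Leffler function
`E^λ_{p,b}(z) = Σ_{k=0}^∞ (λ)_k z^k / (Γ(pk+b) k!)`, where `(λ)_k` is the rising
factorial. -/
noncomputable def genMittagLeffler (p b lam z : ℝ) : ℝ :=
  ∑' k : ℕ, (ascPochhammer ℝ k).eval lam * z ^ k /
    (Real.Gamma (p * k + b) * (Nat.factorial k : ℝ))

open Real Filter Set Topology
open scoped Nat

lemma abs_add_natCast_le (s : ℝ) (n : ℕ) : |s + n| ≤ (1 + |s|) * (n + 1) := by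
  have : |s + n| ≤ |s| + n := (abs_add_le _ _).trans_eq (by rw [Nat.abs_cast])
  nlinarith [abs_nonneg s, n.cast_nonneg (α := ℝ)]

/-- From the log-convexity of `Γ`: the slope of `log Γ` on `[x, x + p]` is at least its slope
`log (x - 1)` on `[x - 1, x]`. -/
theorem Real.Gamma_mul_rpow_le_Gamma_add {x p : ℝ} (hx : 1 < x) (hp : 0 < p) :
    Gamma x * (x - 1) ^ p ≤ Gamma (x + p) := by
  have hx1 : 0 < x - 1 := by linarith
  have hΓ : Gamma x = (x - 1) * Gamma (x - 1) := by
    simpa using Gamma_add_one hx1.ne'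
  have hslope := convexOn_log_Gamma.slope_mono_adjacent (mem_Ioi.mpr hx1)
    (mem_Ioi.mpr (by linarith : 0 < x + p)) (by linarith : x - 1 < x) (by linarith : x < x + p)
  simp only [Function.comp_apply, sub_sub_cancel, div_one, add_sub_cancel_left, hΓ,
    log_mul hx1.ne' (Gamma_pos_of_pos hx1).ne', add_sub_cancel_right] at hslope
  rw [← log_le_log_iff (by positivity) (Gamma_pos_of_pos (by linarith)), hΓ,
    log_mul (by positivity) (by positivity), log_mul hx1.ne' (Gamma_pos_of_pos hx1).ne',
    log_rpow hx1]
  have := (le_div_iff₀ hp).mp hslope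
  linarith

theorem hasDerivAt_rpow_mul_tsum_mul_pow {a : ℕ → ℝ} {s z R : ℝ} (hz : 0 < z) (hzR : z < R)
    (ha : Summable fun n : ℕ => (n + 1) * |a n| * R ^ n) :
    HasDerivAt (fun x => x ^ s * ∑' n, a n * x ^ n)
      (z ^ (s - 1) * ∑' n, (s + n) * a n * z ^ n) z := by
  have hpos : ∀ x ∈ Icc (z / 2) R, 0 < x := fun x hx => (half_pos hz).trans_le hx.1
  obtain ⟨M, hM⟩ := isCompact_Icc.exists_bound_of_continuousOn
    (continuousOn_id.rpow_const fun x hx => Or.inl (hpos x hx).ne' : ContinuousOn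
      (fun x : ℝ => x ^ (s - 1)) (Icc (z / 2) R))
  have hz_mem : z ∈ Ioo (z / 2) R := ⟨half_lt_self hz, hzR⟩
  have hterm : ∀ n, ∀ x ∈ Ioo (z / 2) R, HasDerivAt (fun y => a n * y ^ (s + n))
      (a n * ((s + n) * x ^ (s + n - 1))) x := fun n x hx =>
    (hasDerivAt_rpow_const (Or.inl (hpos x (Ioo_subset_Icc_self hx)).ne')).const_mul (a n)
  have hbound : ∀ n, ∀ x ∈ Ioo (z / 2) R, ‖a n * ((s + n) * x ^ (s + n - 1))‖
      ≤ (1 + |s|) * M * ((n + 1) * |a n| * R ^ n) := by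
    intro n x hx
    have hx0 := hpos x (Ioo_subset_Icc_self hx)
    have hxM : |x ^ (s - 1)| ≤ M := hM x (Ioo_subset_Icc_self hx)
    rw [show s + n - 1 = s - 1 + n by ring, rpow_add_natCast hx0.ne', Real.norm_eq_abs, abs_mul,
      abs_mul, abs_mul, abs_pow, abs_of_pos hx0]
    have hM0 : 0 ≤ M := (abs_nonneg _).trans hxM
    calc |a n| * (|s + n| * (|x ^ (s - 1)| * x ^ n))
        ≤ |a n| * ((1 + |s|) * (n + 1) * (M * R ^ n)) := by
          gcongr
          · exact abs_add_natCast_le s n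
          · exact hx.2.le
      _ = (1 + |s|) * M * ((n + 1) * |a n| * R ^ n) := by ring
  have hsum : Summable fun n => a n * z ^ (s + n) := by
    refine .of_norm_bounded (ha.mul_left (z ^ s)) fun n => ?_
    rw [rpow_add_natCast hz.ne', Real.norm_eq_abs, abs_mul, abs_mul,
      abs_of_pos (rpow_pos_of_pos hz s), abs_pow, abs_of_pos hz]
    calc |a n| * (z ^ s * z ^ n) = z ^ s * (1 * |a n| * z ^ n) := by ring
      _ ≤ z ^ s * ((n + 1) * |a n| * R ^ n) := by gcongr; linarith [n.cast_nonneg (α := ℝ)]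
  have hderiv := hasDerivAt_tsum_of_isPreconnected (ha.mul_left ((1 + |s|) * M)) isOpen_Ioo
    isPreconnected_Ioo hterm hbound hz_mem hsum hz_mem
  refine (hderiv.congr_of_eventuallyEq ?_).congr_deriv ?_
  · filter_upwards [eventually_gt_nhds hz] with x hx
    rw [← tsum_mul_left]
    exact tsum_congr fun n => by rw [rpow_add_natCast hx.ne']; ring
  · rw [← tsum_mul_left]
    exact tsum_congr fun n => by
      rw [show s + n - 1 = s - 1 + n by ring, rpow_add_natCast hz.ne']; ring

noncomputable def mittagLefflerCoeff (p b lam : ℝ) (n : ℕ) : ℝ :=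
  (ascPochhammer ℝ n).eval lam / (Gamma (p * n + b) * n !)

lemma genMittagLeffler_eq_tsum (p b lam z : ℝ) :
    genMittagLeffler p b lam z = ∑' n, mittagLefflerCoeff p b lam n * z ^ n := by
  simp only [genMittagLeffler, mittagLefflerCoeff]
  exact tsum_congr fun n => by ring

lemma mittagLefflerCoeff_mul_add_natCast (p b lam : ℝ) (n : ℕ) :
    mittagLefflerCoeff p b lam n * (lam + n) = lam * mittagLefflerCoeff p b (lam + 1) n := by
  have h : (ascPochhammer ℝ (n + 1)).eval lam = lam * (ascPochhammer ℝ n).eval (lam + 1) := by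
    simp [ascPochhammer_succ_left]
  rw [mittagLefflerCoeff, mittagLefflerCoeff, ← mul_div_assoc, ← h, ascPochhammer_succ_eval,
    div_mul_eq_mul_div]

lemma abs_mittagLefflerCoeff_succ_mul_rpow_le {p b lam : ℝ} (hp : 0 < p) {n : ℕ}
    (hn : 1 < p * n + b) :
    |mittagLefflerCoeff p b lam (n + 1)| * (p * n + b - 1) ^ p
      ≤ (1 + |lam|) * |mittagLefflerCoeff p b lam n| := by
  set Q := (p * n + b - 1) ^ p
  set G := Gamma (p * n + b)
  set A := |(ascPochhammer ℝ n).eval lam|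
  have hQ : 0 < Q := by apply rpow_pos_of_pos; linarith
  have hG : 0 < G := Gamma_pos_of_pos (by linarith)
  have hGamma : G * Q ≤ Gamma (p * ↑(n + 1) + b) := by
    convert Gamma_mul_rpow_le_Gamma_add hn hp using 2
    push_cast; ring
  have hG' : 0 < Gamma (p * ↑(n + 1) + b) := (mul_pos hG hQ).trans_le hGamma
  calc |mittagLefflerCoeff p b lam (n + 1)| * Q
      = A * |lam + n| / (Gamma (p * ↑(n + 1) + b) * ((n + 1) * n !)) * Q := by
        rw [mittagLefflerCoeff, ascPochhammer_succ_eval, Nat.factorial_succ, abs_div, abs_mul,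
          abs_of_pos (by positivity : 0 < Gamma (p * ↑(n + 1) + b) * ↑((n + 1) * n !))]
        push_cast
        rfl
    _ ≤ A * |lam + n| / (G * Q * ((n + 1) * n !)) * Q := by
        gcongr
    _ = |lam + n| / (n + 1) * (A / (G * n !)) := by
        field_simp
    _ ≤ (1 + |lam|) * |mittagLefflerCoeff p b lam n| := by
        rw [mittagLefflerCoeff, abs_div, abs_of_pos (by positivity : 0 < G * n !)]
        gcongr
        rw [div_le_iff₀ (by positivity)]
        exact abs_add_natCast_le lam n

lemma summable_succ_mul_abs_mittagLefflerCoeff_mul_pow {p : ℝ} (b lam : ℝ) (hp : 0 < p)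
    {R : ℝ} (hR : 0 ≤ R) :
    Summable fun n : ℕ => (n + 1) * |mittagLefflerCoeff p b lam n| * R ^ n := by
  set c := mittagLefflerCoeff p b lam
  have hlin : Tendsto (fun n : ℕ => p * n + b) atTop atTop :=
    tendsto_atTop_add_const_right _ b (tendsto_natCast_atTop_atTop.const_mul_atTop hp)
  have hQ : Tendsto (fun n : ℕ => (p * n + b - 1) ^ p) atTop atTop :=
    (tendsto_rpow_atTop hp).comp (tendsto_atTop_add_const_right _ (-1) hlin)
  refine summable_of_ratio_norm_eventually_le (r := 1 / 2) (by norm_num) ?_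
  filter_upwards [hlin.eventually_gt_atTop 1, hQ.eventually_ge_atTop (4 * R * (1 + |lam|))]
    with n hn hnQ
  set Q := (p * n + b - 1) ^ p
  have hQpos : 0 < Q := by apply rpow_pos_of_pos; linarith
  have hratio := abs_mittagLefflerCoeff_succ_mul_rpow_le (lam := lam) hp hn
  rw [Real.norm_of_nonneg (by positivity), Real.norm_of_nonneg (by positivity)]
  refine le_of_mul_le_mul_right ?_ hQpos
  push_cast
  calc (n + 1 + 1) * |c (n + 1)| * R ^ (n + 1) * Q
      = (n + 1 + 1) * R ^ n * R * (|c (n + 1)| * Q) := by ring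
    _ ≤ 2 * (n + 1) * R ^ n * R * ((1 + |lam|) * |c n|) := by gcongr; linarith
    _ = (n + 1) * |c n| * R ^ n * (4 * R * (1 + |lam|)) / 2 := by ring
    _ ≤ (n + 1) * |c n| * R ^ n * Q / 2 := by gcongr
    _ = 1 / 2 * ((n + 1) * |c n| * R ^ n) * Q := by ring

theorem genMittagLeffler_rpow_mul_deriv_general (p b lam : ℝ) (hp : 0 < p)
    (z : ℝ) (hz : 0 < z) :
    deriv (fun z : ℝ => z ^ lam * genMittagLeffler p b lam (-z)) z
      = lam * z ^ (lam - 1) * genMittagLeffler p b (lam + 1) (-z) := by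
  have hseries : ∀ s x, genMittagLeffler p b s (-x)
      = ∑' n, mittagLefflerCoeff p b s n * (-1) ^ n * x ^ n := fun s x => by
    rw [genMittagLeffler_eq_tsum]
    exact tsum_congr fun n => by rw [neg_pow]; ring
  have hsum : Summable fun n : ℕ =>
      (n + 1) * |mittagLefflerCoeff p b lam n * (-1) ^ n| * (2 * z) ^ n := by
    simpa [abs_mul] using
      summable_succ_mul_abs_mittagLefflerCoeff_mul_pow b lam hp (by positivity : 0 ≤ 2 * z)
  simp_rw [hseries]
  rw [(hasDerivAt_rpow_mul_tsum_mul_pow hz (by linarith) hsum).deriv, ← tsum_mul_left,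
    ← tsum_mul_left]
  exact tsum_congr fun n => by
    linear_combination (z ^ (lam - 1) * (-1) ^ n * z ^ n) *
      mittagLefflerCoeff_mul_add_natCast p b lam n

/-- For `p > 0`, `b > 0`, real `λ`, and `z > 0`, the derivative of
`z ↦ z^λ E^λ_{p,b}(−z)` equals `λ z^(λ−1) E^{λ+1}_{p,b}(−z)`. -/
theorem genMittagLeffler_rpow_mul_deriv (p b lam : ℝ) (hp : 0 < p) (hb : 0 < b)
    (z : ℝ) (hz : 0 < z) :
    deriv (fun z : ℝ => z ^ lam * genMittagLeffler p b lam (-z)) z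
      = lam * z ^ (lam - 1) * genMittagLeffler p b (lam + 1) (-z) :=
  genMittagLeffler_rpow_mul_deriv_general p b lam hp z hz
end

section
/- Let R : (0,∞) → ℝ be infinitely differentiable, and write R_{(n)}(x) = (d/dx)^n [x^n R(x)]. Then R_{(n)}(x) ≥ 0 for every nonnegative integer n and every x > 0 if and only if the function 𝓡(w) = R(1/w)/w is completely monotonic on (0,∞); indeed, for every nonnegative integer n and x > 0 one has R_{(n)}(x) = (−1)^n w^{n+1} 𝓡^{(n)}(w) evaluated at w = 1/x. -/
/-- A function `f : ℝ → ℝ` is completely monotonic on `(0, ∞)` if it is infinitely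
differentiable there and `(−1)^n f^(n)(t) ≥ 0` for every `t > 0` and every `n ≥ 0`. -/
def CompletelyMonotonicOn (f : ℝ → ℝ) : Prop :=
  ContDiffOn ℝ (⊤ : ℕ∞) f (Set.Ioi 0) ∧
    ∀ (n : ℕ), ∀ t > (0 : ℝ), 0 ≤ (-1 : ℝ) ^ n * iteratedDeriv n f t


open Set Filter Topology

lemma aux_eqOn (f : ℝ → ℝ) (n : ℕ) :
    Set.EqOn (iteratedDerivWithin n f (Set.Ioi 0)) (iteratedDeriv n f) (Set.Ioi 0) := by
  intro y hy
  rw [iteratedDerivWithin_eq_iteratedFDerivWithin, iteratedDeriv_eq_iteratedFDeriv,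
    iteratedFDerivWithin_of_isOpen n isOpen_Ioi hy]

lemma aux_diffAt {f : ℝ → ℝ} (hf : ContDiffOn ℝ (⊤ : ℕ∞) f (Set.Ioi 0)) (n : ℕ) {x : ℝ}
    (hx : 0 < x) : DifferentiableAt ℝ (iteratedDeriv n f) x := by
  have hdo : DifferentiableOn ℝ (iteratedDerivWithin n f (Set.Ioi 0)) (Set.Ioi 0) :=
    hf.differentiableOn_iteratedDerivWithin (by exact_mod_cast ENat.coe_lt_top n) isOpen_Ioi.uniqueDiffOn
  have h1 : DifferentiableAt ℝ (iteratedDerivWithin n f (Set.Ioi 0)) x :=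
    hdo.differentiableAt (isOpen_Ioi.mem_nhds hx)
  have hEv : iteratedDerivWithin n f (Set.Ioi 0) =ᶠ[𝓝 x] iteratedDeriv n f :=
    Filter.eventuallyEq_of_mem (isOpen_Ioi.mem_nhds hx) (fun y hy => aux_eqOn f n hy)
  exact hEv.differentiableAt_iff.mp h1

lemma aux_leibniz {h : ℝ → ℝ} (hh : ContDiffOn ℝ (⊤ : ℕ∞) h (Set.Ioi 0)) (n : ℕ) :
    ∀ x > (0:ℝ), iteratedDeriv n (fun y => y * h y) x
      = x * iteratedDeriv n h x + n * iteratedDeriv (n - 1) h x := by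
  induction n with
  | zero => intro x hx; simp [iteratedDeriv_zero]
  | succ n IH =>
    intro x hx
    rw [iteratedDeriv_succ]
    have hEv : iteratedDeriv n (fun y => y * h y) =ᶠ[𝓝 x]
        (fun y => y * iteratedDeriv n h y + n * iteratedDeriv (n - 1) h y) :=
      Filter.eventuallyEq_of_mem (isOpen_Ioi.mem_nhds hx) (fun y hy => IH y hy)
    rw [hEv.deriv_eq]
    have h1 : HasDerivAt (fun y => y * iteratedDeriv n h y)
        (1 * iteratedDeriv n h x + x * iteratedDeriv (n + 1) h x) x := by
      have := (hasDerivAt_id x).fun_mul ((aux_diffAt hh n hx).hasDerivAt)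
      simpa [iteratedDeriv_succ] using this
    have h2 : HasDerivAt (fun y => (n : ℝ) * iteratedDeriv (n - 1) h y)
        ((n : ℝ) * iteratedDeriv (n - 1 + 1) h x) x := by
      have := ((aux_diffAt hh (n - 1) hx).hasDerivAt).const_mul (n : ℝ)
      simpa [iteratedDeriv_succ] using this
    rw [(h1.fun_add h2).deriv]
    rcases Nat.eq_zero_or_pos n with hn | hn
    · subst hn; simp; ring
    · rw [Nat.sub_add_cancel hn]
      have : ((n:ℕ) + 1 - 1 : ℕ) = n := rfl
      rw [this]
      push_cast
      ring

lemma aux_smoothR {R : ℝ → ℝ} (hR : ContDiffOn ℝ (⊤ : ℕ∞) R (Set.Ioi 0)) :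
    ContDiffOn ℝ (⊤ : ℕ∞) (fun w => R (1 / w) / w) (Set.Ioi 0) := by
  have h1 : ContDiffOn ℝ (⊤ : ℕ∞) (fun w : ℝ => 1 / w) (Set.Ioi 0) := by
    refine ((contDiffOn_id (𝕜 := ℝ) (s := Set.Ioi 0)).inv
      (fun x hx => ne_of_gt hx)).congr (fun x hx => by simp)
  have h2 : ContDiffOn ℝ (⊤ : ℕ∞) (fun w : ℝ => R (1 / w)) (Set.Ioi 0) :=
    hR.comp h1 (fun w hw => by simp only [Set.mem_Ioi] at *; positivity)
  exact h2.div contDiffOn_id (fun x hx => ne_of_gt hx)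

lemma aux_key {R : ℝ → ℝ} (hR : ContDiffOn ℝ (⊤ : ℕ∞) R (Set.Ioi 0)) (n : ℕ) :
    ∀ x > (0:ℝ), iteratedDeriv n (fun y => y ^ n * R y) x
      = (-1 : ℝ) ^ n * (1 / x) ^ (n + 1) *
          iteratedDeriv n (fun w => R (1 / w) / w) (1 / x) := by
  have h𝓡 := aux_smoothR hR
  induction n with
  | zero =>
    intro x hx
    simp only [pow_zero, one_mul, iteratedDeriv_zero, pow_one]
    rw [one_div_one_div]
    field_simp
    rw [zero_add, pow_one, mul_assoc, mul_one_div_cancel (ne_of_gt hx), mul_one]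
  | succ n IH =>
    intro x hx
    have hxi : (0:ℝ) < 1 / x := by positivity
    have hsm : ContDiffOn ℝ (⊤ : ℕ∞) (fun y : ℝ => y ^ n * R y) (Set.Ioi 0) :=
      ((contDiff_id.pow n).contDiffOn).mul hR
    have hfun : (fun y : ℝ => y ^ (n + 1) * R y) = fun y => y * (y ^ n * R y) := by
      funext y; ring
    rw [hfun, aux_leibniz hsm (n + 1) x hx]
    have hn1 : (n + 1 - 1 : ℕ) = n := rfl
    rw [hn1]
    -- compute iteratedDeriv (n+1) (fun y => y^n * R y) x
    have hEv : iteratedDeriv n (fun y => y ^ n * R y) =ᶠ[𝓝 x]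
        (fun y => (-1 : ℝ) ^ n * (1 / y) ^ (n + 1) * iteratedDeriv n (fun w => R (1 / w) / w) (1 / y)) :=
      Filter.eventuallyEq_of_mem (isOpen_Ioi.mem_nhds hx) (fun y hy => IH y hy)
    have hinv : HasDerivAt (fun y : ℝ => 1 / y) (-(x ^ 2)⁻¹) x := by
      simpa [one_div] using hasDerivAt_inv (ne_of_gt hx)
    have hpow : HasDerivAt (fun y : ℝ => (1 / y) ^ (n + 1))
        ((n + 1 : ℕ) * (1 / x) ^ n * (-(x ^ 2)⁻¹)) x := by
      simpa using hinv.fun_pow (n + 1)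
    have hGd : HasDerivAt (iteratedDeriv n (fun w => R (1 / w) / w))
        (iteratedDeriv (n + 1) (fun w => R (1 / w) / w) (1 / x)) (1 / x) := by
      have h := (aux_diffAt h𝓡 n hxi).hasDerivAt
      rwa [← iteratedDeriv_succ] at h
    have hcomp : HasDerivAt (fun y : ℝ => iteratedDeriv n (fun w => R (1 / w) / w) (1 / y))
        (iteratedDeriv (n + 1) (fun w => R (1 / w) / w) (1 / x) * (-(x ^ 2)⁻¹)) x := hGd.comp x hinv
    have hF : HasDerivAt (fun y => (-1 : ℝ) ^ n * (1 / y) ^ (n + 1) * iteratedDeriv n (fun w => R (1 / w) / w) (1 / y))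
        ((-1 : ℝ) ^ n * (((n + 1 : ℕ) * (1 / x) ^ n * (-(x ^ 2)⁻¹)) * iteratedDeriv n (fun w => R (1 / w) / w) (1 / x)
          + (1 / x) ^ (n + 1) * (iteratedDeriv (n + 1) (fun w => R (1 / w) / w) (1 / x) * (-(x ^ 2)⁻¹)))) x := by
      have := (hpow.fun_mul hcomp).const_mul ((-1 : ℝ) ^ n)
      have e : (fun y => (-1 : ℝ) ^ n * (1 / y) ^ (n + 1) * iteratedDeriv n (fun w => R (1 / w) / w) (1 / y))
          = fun y => (-1 : ℝ) ^ n * ((1 / y) ^ (n + 1) * iteratedDeriv n (fun w => R (1 / w) / w) (1 / y)) := by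
        funext y; ring
      rw [e]; exact this
    rw [iteratedDeriv_succ, hEv.deriv_eq, hF.deriv, IH x hx]
    have hx' : x ≠ 0 := ne_of_gt hx
    field_simp
    have hxx : x * x⁻¹ = 1 := mul_inv_cancel₀ hx'
    linear_combination (((n + 1 : ℕ) : ℝ) * x⁻¹ ^ n * iteratedDeriv n (fun w => R (1 / w) / w) (1 / x) * (-1) ^ n
      + x⁻¹ * x⁻¹ ^ n * iteratedDeriv (n + 1) (fun w => R (1 / w) / w) (1 / x) * (-1) ^ n) * hxx

/-- For a smooth `R` on `(0,∞)`, writing `R_(n)(x) = (d/dx)^n [x^n R(x)]`: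
`R_(n)(x) ≥ 0` for every `n ≥ 0` and `x > 0` if and only if `𝓡(w) = R(1/w)/w` is
completely monotonic on `(0,∞)`; indeed for every `n ≥ 0` and `x > 0`,
`R_(n)(x) = (−1)^n w^(n+1) 𝓡^(n)(w)` evaluated at `w = 1/x`. -/
theorem radial_nonneg_iff_completelyMonotonic (R : ℝ → ℝ)
    (hR : ContDiffOn ℝ (⊤ : ℕ∞) R (Set.Ioi 0)) :
    ((∀ (n : ℕ), ∀ x > (0 : ℝ), 0 ≤ iteratedDeriv n (fun y => y ^ n * R y) x) ↔
        CompletelyMonotonicOn (fun w => R (1 / w) / w)) ∧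
      ∀ (n : ℕ), ∀ x > (0 : ℝ),
        iteratedDeriv n (fun y => y ^ n * R y) x
          = (-1 : ℝ) ^ n * (1 / x) ^ (n + 1) *
              iteratedDeriv n (fun w => R (1 / w) / w) (1 / x) := by
  have hkey := aux_key hR
  refine ⟨⟨fun hpos => ⟨aux_smoothR hR, ?_⟩, fun hCM n x hx => ?_⟩, hkey⟩
  · intro n t ht
    have hx : (0:ℝ) < 1 / t := by positivity
    have h := hpos n (1 / t) hx
    rw [hkey n (1 / t) hx, one_div_one_div] at h
    have ht1 : (0:ℝ) < t ^ (n + 1) := by positivity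
    have hre : (-1:ℝ) ^ n * t ^ (n + 1) * iteratedDeriv n (fun w => R (1 / w) / w) t
        = ((-1:ℝ) ^ n * iteratedDeriv n (fun w => R (1 / w) / w) t) * t ^ (n + 1) := by ring
    rw [hre] at h
    exact (mul_nonneg_iff_of_pos_right ht1).mp h
  · rw [hkey n x hx]
    have hx1 : (0:ℝ) < 1 / x := by positivity
    have h := hCM.2 n (1 / x) hx1
    have hp : (0:ℝ) ≤ (1 / x) ^ (n + 1) := by positivity
    calc (0:ℝ) ≤ (1 / x) ^ (n + 1) * ((-1:ℝ) ^ n *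
            iteratedDeriv n (fun w => R (1 / w) / w) (1 / x)) := mul_nonneg hp h
      _ = _ := by ring
end
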